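/- Let α > 0, p > 1 + α, and suppose (w_k)_{k≥1} is a sequence of Borel functions w_k : ℝ → [0,∞) with w_{k+1} ≤ w_k pointwise, w_1 ≡ 1, and such that for some constant C > 0 (depending only on p, α) and all k ≥ 2 and all bounded intervals I: (⨍_I w_k)(⨍_I w_k^{1/(1-p)})^{p-1} ≤ max{ (1+ε_k)^p (⨍_I w_{k-1})(⨍_I w_{k-1}^{1/(1-p)})^{p-1}, C }, where ε_k > 0 satisfy ∏_{k}(1+ε_k) < ∞. Then w = inf_k w_k is a Muckenhoupt A_p-weight on ℝ. -/

import Mathlib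

open MeasureTheory Set
open scoped ENNReal

/-!
Iterating the step inequality from `A_p(w_0) = 1` bounds the `A_p` product of every `w_k`, on
every interval, by `(∏ (1 + ε_j))^p max(1, C)`. Passing to `w = inf_k w_k`, the average of `w` is
at most that of each `w_k`, while the averages of `w_k^{1/(1-p)}` increase to that of
`w^{1/(1-p)}` by monotone convergence; so the uniform bound survives in the limit.
-/

namespace ENNReal

theorem iSup_rpow {ι : Sort*} (f : ι → ℝ≥0∞) {y : ℝ} (hy : 0 < y) :
    (⨆ i, f i) ^ y = ⨆ i, f i ^ y :=
  (orderIsoRpow y hy).map_iSup f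

theorem iInf_rpow_of_neg {ι : Sort*} (f : ι → ℝ≥0∞) {y : ℝ} (hy : y < 0) :
    (⨅ i, f i) ^ y = ⨆ i, f i ^ y := by
  have hinv : ∀ z : ℝ≥0∞, z ^ y = (z ^ (-y))⁻¹ := fun z => by rw [← rpow_neg, neg_neg]
  simp_rw [hinv]
  rw [show (⨅ i, f i) ^ (-y) = ⨅ i, f i ^ (-y) from
    (orderIsoRpow (-y) (neg_pos.2 hy)).map_iInf f, inv_iInf]

theorem rpow_le_rpow_of_nonpos {x y : ℝ≥0∞} {z : ℝ} (hxy : x ≤ y) (hz : z ≤ 0) :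
    y ^ z ≤ x ^ z := by
  obtain ⟨t, ht, rfl⟩ : ∃ t, 0 ≤ t ∧ z = -t := ⟨-z, neg_nonneg.2 hz, (neg_neg z).symm⟩
  rw [rpow_neg, rpow_neg]
  exact ENNReal.inv_le_inv.2 (rpow_le_rpow hxy ht)

theorem le_prod_range_mul_max_of_le_max_mul {x c : ℕ → ℝ≥0∞} {C : ℝ≥0∞}
    (hc : ∀ k, 1 ≤ c k) (hx₀ : x 0 ≤ 1)
    (hx : ∀ k, x (k + 1) ≤ max (c (k + 1) * x k) C) :
    ∀ k, x k ≤ (∏ j ∈ Finset.range (k + 1), c j) * max 1 C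
  | 0 => by
    simpa using hx₀.trans ((le_max_left 1 C).trans (le_mul_of_one_le_left' (hc 0)))
  | k + 1 => by
    refine (hx k).trans (max_le ?_ ?_)
    · calc c (k + 1) * x k
          ≤ c (k + 1) * ((∏ j ∈ Finset.range (k + 1), c j) * max 1 C) := by
            gcongr; exact le_prod_range_mul_max_of_le_max_mul hc hx₀ hx k
        _ = (∏ j ∈ Finset.range (k + 2), c j) * max 1 C := by
            rw [Finset.prod_range_succ _ (k + 1)]; ring
    · exact (le_max_right 1 C).trans
        (le_mul_of_one_le_left' (Finset.one_le_prod' fun j _ => hc j))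

end ENNReal

section ApProduct

variable {X : Type*} [MeasurableSpace X]

noncomputable def apProduct (μ : Measure X) (p : ℝ) (v : X → ℝ) (s : Set X) : ℝ≥0∞ :=
  (⨍⁻ x in s, ENNReal.ofReal (v x) ∂μ) *
    (⨍⁻ x in s, ENNReal.ofReal (v x) ^ (1 / (1 - p)) ∂μ) ^ (p - 1)

theorem apProduct_Icc (p : ℝ) (v : ℝ → ℝ) (a b : ℝ) :
    apProduct volume p v (Icc a b) =
      ((ENNReal.ofReal (b - a))⁻¹ * ∫⁻ x in Icc a b, ENNReal.ofReal (v x)) *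
        ((ENNReal.ofReal (b - a))⁻¹ *
            ∫⁻ x in Icc a b, ENNReal.ofReal (v x) ^ (1 / (1 - p))) ^ (p - 1) := by
  simp only [apProduct, setLAverage_eq, Real.volume_Icc, ENNReal.div_eq_inv_mul]

theorem apProduct_const_one {μ : Measure X} {s : Set X} (p : ℝ) (hs₀ : μ s ≠ 0)
    (hs : μ s ≠ ∞) : apProduct μ p (fun _ => 1) s = 1 := by
  simp [apProduct, setLAverage_const hs₀ hs]

/-- The first average only decreases along `v`, while the second converges by monotone
convergence, `t ↦ t ^ (1/(1-p))` being decreasing. -/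
theorem apProduct_iInf_le_iSup (μ : Measure X) (s : Set X) {p : ℝ} (hp : 1 < p)
    {v : ℕ → X → ℝ} (hmeas : ∀ k, Measurable (v k)) (hv : Antitone v) :
    apProduct μ p (fun x => ⨅ k, v k x) s ≤ ⨆ k, apProduct μ p (v k) s := by
  have hq : 1 / (1 - p) < 0 := one_div_neg.2 (by linarith)
  have hpow : ∀ x, ENNReal.ofReal (⨅ k, v k x) ^ (1 / (1 - p)) =
      ⨆ k, ENNReal.ofReal (v k x) ^ (1 / (1 - p)) := fun x => by
    rw [ENNReal.ofReal_iInf, ENNReal.iInf_rpow_of_neg _ hq]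
  have hsecond : ⨍⁻ x in s, ENNReal.ofReal (⨅ k, v k x) ^ (1 / (1 - p)) ∂μ =
      ⨆ k, ⨍⁻ x in s, ENNReal.ofReal (v k x) ^ (1 / (1 - p)) ∂μ := by
    simp_rw [hpow]
    exact lintegral_iSup (fun k => (hmeas k).ennreal_ofReal.pow_const _) fun k m hkm x =>
      ENNReal.rpow_le_rpow_of_nonpos (ENNReal.ofReal_le_ofReal (hv hkm x)) hq.le
  rw [apProduct, hsecond, ENNReal.iSup_rpow _ (by linarith), ENNReal.mul_iSup]
  refine iSup_mono fun k => mul_le_mul_left (setLAverage_mono_ae s ?_) _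
  exact ae_of_all _ fun x => (ENNReal.ofReal_iInf (v · x)).trans_le (iInf_le _ k)

end ApProduct

theorem stmt_16_general (α p : ℝ) (hα : 0 < α) (hp : 1 + α < p)
    (w : ℕ → ℝ → ℝ) (hmeas : ∀ k, Measurable (w k))
    (hmono : ∀ k x, w (k + 1) x ≤ w k x) (hone : ∀ x, w 0 x = 1)
    (ε : ℕ → ℝ) (hε : ∀ k, 0 < ε k)
    (hprod : ∃ M : ℝ, ∀ K : ℕ, ∏ k ∈ Finset.range K, (1 + ε k) ≤ M)
    (C : ℝ≥0∞) (hCfin : C < ⊤)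
    (A : (ℝ → ℝ) → ℝ → ℝ → ℝ≥0∞)
    (hA : ∀ v a b, A v a b =
      ((ENNReal.ofReal (b - a))⁻¹ * ∫⁻ x in Set.Icc a b, ENNReal.ofReal (v x)) *
        ((ENNReal.ofReal (b - a))⁻¹ *
            ∫⁻ x in Set.Icc a b, ENNReal.ofReal (v x) ^ (1 / (1 - p))) ^ (p - 1))
    (hstep : ∀ k : ℕ, 1 ≤ k → ∀ a b : ℝ, a < b →
      A (w k) a b ≤ max ((ENNReal.ofReal (1 + ε k)) ^ p * A (w (k - 1)) a b) C) :
    ∃ C' : ℝ≥0∞, C' < ⊤ ∧ ∀ a b : ℝ, a < b → A (fun x => ⨅ k, w k x) a b ≤ C' := by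
  obtain ⟨M, hM⟩ := hprod
  have hp₀ : 0 < p := by linarith
  obtain rfl : A = fun v a b => apProduct volume p v (Icc a b) := by
    funext v a b; rw [hA, apProduct_Icc]
  dsimp only at hstep ⊢
  have hprod_pow (k : ℕ) :
      ∏ j ∈ Finset.range (k + 1), ENNReal.ofReal (1 + ε j) ^ p ≤ ENNReal.ofReal M ^ p := by
    rw [ENNReal.prod_rpow_of_nonneg hp₀.le,
      ← ENNReal.ofReal_prod_of_nonneg fun j _ => by linarith [hε j]]
    gcongr
    exact hM (k + 1)
  have hbound (k : ℕ) (a b : ℝ) (hab : a < b) :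
      apProduct volume p (w k) (Icc a b) ≤ ENNReal.ofReal M ^ p * max 1 C := by
    have hbase : apProduct volume p (w 0) (Icc a b) ≤ 1 := by
      rw [funext hone, apProduct_const_one p (by simp [hab]) (by simp)]
    calc apProduct volume p (w k) (Icc a b)
        ≤ (∏ j ∈ Finset.range (k + 1), ENNReal.ofReal (1 + ε j) ^ p) * max 1 C :=
          ENNReal.le_prod_range_mul_max_of_le_max_mul (x := fun k => apProduct volume p (w k) _)
            (fun j => ENNReal.one_le_rpow (by simp [(hε j).le]) hp₀) hbase
            (fun n => hstep (n + 1) n.succ_pos a b hab) k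
      _ ≤ ENNReal.ofReal M ^ p * max 1 C := mul_le_mul_left (hprod_pow k) _
  refine ⟨ENNReal.ofReal M ^ p * max 1 C, by finiteness, fun a b hab => ?_⟩
  exact (apProduct_iInf_le_iSup volume _ (by linarith) hmeas (antitone_nat_of_succ_le hmono)).trans
    (iSup_le fun k => hbound k a b hab)

/-- if each construction step increases the `A_p`-product of the weights
`w_k` at most by a factor `(1+ε_k)^p` (or keeps it below a universal constant `C`),
with `∏(1+ε_k) < ∞`, then the limit weight `w = inf_k w_k` is an `A_p`-weight on `ℝ`.
Here `A v a b` denotes the `A_p`-product of `v` over the interval `[a,b]`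
(`ℝ≥0∞`-valued, so that `0^{1/(1-p)} = ∞`). -/
theorem stmt_16 (α p : ℝ) (hα : 0 < α) (hp : 1 + α < p)
    (w : ℕ → ℝ → ℝ) (hmeas : ∀ k, Measurable (w k)) (h0 : ∀ k x, 0 ≤ w k x)
    (hmono : ∀ k x, w (k + 1) x ≤ w k x) (hone : ∀ x, w 0 x = 1)
    (ε : ℕ → ℝ) (hε : ∀ k, 0 < ε k)
    (hprod : ∃ M : ℝ, ∀ K : ℕ, ∏ k ∈ Finset.range K, (1 + ε k) ≤ M)
    (C : ℝ≥0∞) (hC : 0 < C) (hCfin : C < ⊤)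
    (A : (ℝ → ℝ) → ℝ → ℝ → ℝ≥0∞)
    (hA : ∀ v a b, A v a b =
      ((ENNReal.ofReal (b - a))⁻¹ * ∫⁻ x in Set.Icc a b, ENNReal.ofReal (v x)) *
        ((ENNReal.ofReal (b - a))⁻¹ *
            ∫⁻ x in Set.Icc a b, ENNReal.ofReal (v x) ^ (1 / (1 - p))) ^ (p - 1))
    (hstep : ∀ k : ℕ, 1 ≤ k → ∀ a b : ℝ, a < b →
      A (w k) a b ≤ max ((ENNReal.ofReal (1 + ε k)) ^ p * A (w (k - 1)) a b) C) :
    ∃ C' : ℝ≥0∞, C' < ⊤ ∧ ∀ a b : ℝ, a < b → A (fun x => ⨅ k, w k x) a b ≤ C' :=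
  stmt_16_general α p hα hp w hmeas hmono hone ε hε hprod C hCfin A hA hstep
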